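/- Let Π ⊂ ℝ² be locally finite and let x, y ∈ Π be adjacent in the Delaunay graph 𝕋, i.e. there exists p ∈ ℝ² with |p − x| = |p − y| = dist(p, Π). Let m = (x + y)/2. Then there exists a unit vector u orthogonal to y − x such that the half-disk { q ∈ ℝ² : |q − m| < |x − y|/2 and ⟨q − m, u⟩ ≥ 0 } contains no point of Π. -/

import Mathlib

open scoped BigOperators
open scoped Classical

noncomputable section

namespace Delaunay

/-- Euclidean distance on `ℝ²`. -/
def eDist (p q : ℝ × ℝ) : ℝ := Real.sqrt ((p.1 - q.1)^2 + (p.2 - q.2)^2)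

/-- Euclidean distance from a point to a set. -/
def distToSet (p : ℝ × ℝ) (S : Set (ℝ × ℝ)) : ℝ := sInf (eDist p '' S)

/-- A subset of the plane is locally finite if it has finitely many points in every
bounded region. -/
def LocFin (P : Set (ℝ × ℝ)) : Prop :=
  ∀ R : ℝ, (P ∩ {q | eDist (0, 0) q ≤ R}).Finite

/-- The Voronoi cell of `x ∈ P`. -/
def vorCell (P : Set (ℝ × ℝ)) (x : ℝ × ℝ) : Set (ℝ × ℝ) :=
  {p | ∀ y ∈ P, eDist p x ≤ eDist p y}

/-- The Voronoi (Delaunay) triangulation of `P`: `x` and `y` are adjacent iff their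
Voronoi cells share a common boundary edge, i.e. the set of points equidistant from
`x` and `y` at distance `dist(·, P)` contains more than one point. -/
def delaunay (P : Set (ℝ × ℝ)) : SimpleGraph (ℝ × ℝ) where
  Adj x y := x ≠ y ∧ x ∈ P ∧ y ∈ P ∧
    Set.Nontrivial {p : ℝ × ℝ | eDist p x = eDist p y ∧ eDist p x = distToSet p P}
  symm := ⟨by
    rintro x y ⟨hne, hx, hy, p, hp, q, hq, hpq⟩
    exact ⟨hne.symm, hy, hx, p, ⟨hp.1.symm, hp.1.symm.trans hp.2⟩,
      q, ⟨hq.1.symm, hq.1.symm.trans hq.2⟩, hpq⟩⟩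
  loopless := ⟨fun x h => h.1 rfl⟩

/-- The square `z + [-a,a]²`. -/
def square (z : ℝ × ℝ) (a : ℝ) : Set (ℝ × ℝ) :=
  {p | |p.1 - z.1| ≤ a ∧ |p.2 - z.2| ≤ a}

/-- The `(i,j)`-th of the 400 congruent subsquares of side `s/10` of `Λ_s(x)`. -/
def subsq (x : ℝ × ℝ) (s : ℝ) (i j : Fin 20) : Set (ℝ × ℝ) :=
  {p | x.1 - s + (i : ℕ) * (s/10) ≤ p.1 ∧ p.1 ≤ x.1 - s + ((i : ℕ) + 1) * (s/10) ∧
       x.2 - s + (j : ℕ) * (s/10) ≤ p.2 ∧ p.2 ≤ x.2 - s + ((j : ℕ) + 1) * (s/10)}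

/-- `Λ_s(x)` is red: each of its 400 subsquares contains at least one point of `P`. -/
def red (P : Set (ℝ × ℝ)) (x : ℝ × ℝ) (s : ℝ) : Prop :=
  ∀ i j : Fin 20, (P ∩ subsq x s i j).Nonempty

/-- `Λ_s(x)` is `A`-red: each of its 400 subsquares contains at least one and at most
`A s²` points of `P`. -/
def ARed (P : Set (ℝ × ℝ)) (x : ℝ × ℝ) (s A : ℝ) : Prop :=
  ∀ i j : Fin 20, (P ∩ subsq x s i j).Nonempty ∧ (P ∩ subsq x s i j).Finite ∧
    ((P ∩ subsq x s i j).ncard : ℝ) ≤ A * s^2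


lemma eDist_nonneg' (p q : ℝ × ℝ) : 0 ≤ eDist p q := Real.sqrt_nonneg _

lemma eDist_sq (p q : ℝ × ℝ) : (eDist p q)^2 = (p.1 - q.1)^2 + (p.2 - q.2)^2 :=
  Real.sq_sqrt (by positivity)

lemma eDist_comm' (p q : ℝ × ℝ) : eDist p q = eDist q p := by
  unfold eDist; ring_nf

lemma distToSet_le' (p q : ℝ × ℝ) (S : Set (ℝ × ℝ)) (hq : q ∈ S) :
    distToSet p S ≤ eDist p q :=
  csInf_le ⟨0, by rintro _ ⟨z, _, rfl⟩; exact eDist_nonneg' p z⟩ ⟨q, hq, rfl⟩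

/-- the empty half-disk property of Delaunay edges: if `x, y ∈ Π`
are Delaunay-adjacent, then one of the two open half-disks of the disk with diameter
`[x,y]` contains no point of `Π`. -/
theorem statement_10 :
    ∀ P : Set (ℝ × ℝ), LocFin P →
    ∀ x ∈ P, ∀ y ∈ P, x ≠ y →
    (∃ p : ℝ × ℝ, eDist p x = eDist p y ∧ eDist p x = distToSet p P) →
    ∃ u : ℝ × ℝ, u.1^2 + u.2^2 = 1 ∧
      u.1 * (y.1 - x.1) + u.2 * (y.2 - x.2) = 0 ∧
      ∀ q ∈ P,
        ¬(eDist q ((x.1 + y.1)/2, (x.2 + y.2)/2) < eDist x y / 2 ∧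
          0 ≤ (q.1 - (x.1 + y.1)/2) * u.1 + (q.2 - (x.2 + y.2)/2) * u.2) := by
  intro P _ x hx y hy hxy ⟨p, hpxy, hpd⟩
  obtain ⟨m, hm⟩ : ∃ m : ℝ × ℝ, m = ((x.1 + y.1)/2, (x.2 + y.2)/2) := ⟨_, rfl⟩
  have hm1 : m.1 = (x.1 + y.1)/2 := by rw [hm]
  have hm2 : m.2 = (x.2 + y.2)/2 := by rw [hm]
  rw [← hm, ← hm1, ← hm2]
  have hdsq : (eDist x y)^2 = (x.1 - y.1)^2 + (x.2 - y.2)^2 := eDist_sq x y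
  have hxy' : (x.1 - y.1)^2 + (x.2 - y.2)^2 > 0 := by
    by_contra hc
    push_neg at hc
    have h1 : (x.1 - y.1)^2 = 0 :=
      le_antisymm (by nlinarith [sq_nonneg (x.2 - y.2)]) (sq_nonneg _)
    have h2 : (x.2 - y.2)^2 = 0 :=
      le_antisymm (by nlinarith [sq_nonneg (x.1 - y.1)]) (sq_nonneg _)
    have e1 := sub_eq_zero.mp (pow_eq_zero_iff two_ne_zero |>.mp h1)
    have e2 := sub_eq_zero.mp (pow_eq_zero_iff two_ne_zero |>.mp h2)
    exact hxy (Prod.ext e1 e2)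
  have hd : 0 < eDist x y := Real.sqrt_pos.mpr hxy'
  have hsqeq : (p.1 - x.1)^2 + (p.2 - x.2)^2 = (p.1 - y.1)^2 + (p.2 - y.2)^2 := by
    have := congrArg (·^2) hpxy
    simpa [eDist_sq] using this
  by_cases hpm : p = m
  · -- p is the midpoint: the whole open disk is empty
    refine ⟨((y.2 - x.2)/(eDist x y), (x.1 - y.1)/(eDist x y)), ?_, ?_, ?_⟩
    · field_simp
      nlinarith [hdsq]
    · field_simp
      ring
    · rintro q hq ⟨h1, -⟩
      have hle := distToSet_le' p q P hq
      have hpx : eDist p x = eDist x y / 2 := by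
        have h1' : (eDist p x)^2 = (eDist x y / 2)^2 := by
          rw [eDist_sq]
          subst hpm
          rw [hm1, hm2]
          linear_combination - hdsq / 4
        have := eDist_nonneg' p x
        nlinarith [hd]
      have hcm : eDist q m = eDist p q := by rw [hpm, eDist_comm']
      rw [hcm] at h1
      rw [hpd] at hpx
      linarith
  · -- general case
    have hc : 0 < eDist p m := by
      rw [show eDist p m = Real.sqrt ((p.1 - m.1)^2 + (p.2 - m.2)^2) from rfl]
      apply Real.sqrt_pos.mpr
      by_contra hcc
      push_neg at hcc
      have h1 : (p.1 - m.1)^2 = 0 :=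
        le_antisymm (by nlinarith [sq_nonneg (p.2 - m.2)]) (sq_nonneg _)
      have h2 : (p.2 - m.2)^2 = 0 :=
        le_antisymm (by nlinarith [sq_nonneg (p.1 - m.1)]) (sq_nonneg _)
      have e1 := sub_eq_zero.mp (pow_eq_zero_iff two_ne_zero |>.mp h1)
      have e2 := sub_eq_zero.mp (pow_eq_zero_iff two_ne_zero |>.mp h2)
      exact hpm (Prod.ext e1 e2)
    have hcsq : (eDist p m)^2 = (p.1 - m.1)^2 + (p.2 - m.2)^2 := eDist_sq p m
    have hort : (p.1 - m.1) * (y.1 - x.1) + (p.2 - m.2) * (y.2 - x.2) = 0 := by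
      rw [hm1, hm2]
      linear_combination hsqeq / 2
    refine ⟨((p.1 - m.1)/(eDist p m), (p.2 - m.2)/(eDist p m)), ?_, ?_, ?_⟩
    · show ((p.1 - m.1)/(eDist p m))^2 + ((p.2 - m.2)/(eDist p m))^2 = 1
      rw [div_pow, div_pow, ← add_div, ← hcsq,
        div_self (pow_ne_zero 2 hc.ne')]
    · show ((p.1 - m.1)/(eDist p m)) * (y.1 - x.1) +
        ((p.2 - m.2)/(eDist p m)) * (y.2 - x.2) = 0
      rw [div_mul_eq_mul_div, div_mul_eq_mul_div, ← add_div,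
        div_eq_zero_iff]
      exact Or.inl hort
    · rintro q hq ⟨h1, h2⟩
      have h2' : 0 ≤ (q.1 - m.1) * (p.1 - m.1) + (q.2 - m.2) * (p.2 - m.2) := by
        have hmul := mul_nonneg h2 hc.le
        have heq : ((q.1 - m.1) * ((p.1 - m.1)/(eDist p m)) +
            (q.2 - m.2) * ((p.2 - m.2)/(eDist p m))) * eDist p m =
            (q.1 - m.1) * (p.1 - m.1) + (q.2 - m.2) * (p.2 - m.2) := by
          rw [mul_div_assoc', mul_div_assoc', ← add_div,
            div_mul_cancel₀ _ hc.ne']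
        linarith [heq ▸ hmul]
      have h1sq : (q.1 - m.1)^2 + (q.2 - m.2)^2 < ((x.1 - y.1)^2 + (x.2 - y.2)^2)/4 := by
        have hlt2 := pow_lt_pow_left₀ h1 (eDist_nonneg' q m) two_ne_zero
        have hhalf : (eDist x y / 2)^2 = ((x.1 - y.1)^2 + (x.2 - y.2)^2)/4 := by
          rw [div_pow, hdsq]; norm_num
        rw [eDist_sq, hhalf] at hlt2
        exact hlt2
      have hkey : (eDist p q)^2 < (eDist p x)^2 := by
        rw [eDist_sq, eDist_sq]
        rw [hm1, hm2] at h2' h1sq hort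
        linarith [h2', h1sq, hort]
      have hlt : eDist p q < eDist p x :=
        lt_of_pow_lt_pow_left₀ 2 (eDist_nonneg' p x) hkey
      have hle := distToSet_le' p q P hq
      rw [← hpd] at hle
      linarith


end Delaunay
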